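/- arXiv:1901.11180 — 2 statements merged into one kernel-verified Lean document; each statement's English description precedes it below -/
import Mathlib

section
/- Let θ, d, e be real numbers with d ≠ 0, e ≠ 0, |d| ≤ |e|, d ≠ e, d·e > 0, and θ − e² < 0, and let J₂ be the real 2×2 matrix with rows (0, 1) and ((d − e)/d, θ − e²). Then every complex eigenvalue λ of J₂ (viewed as a complex matrix) satisfies Re(λ) < 0. -/
open Matrix Complex

/-- `μ` is an eigenvalue of the real 2×2 matrix `M` viewed as a complex matrix. -/
def IsEigenvalueC (M : Matrix (Fin 2) (Fin 2) ℝ) (μ : ℂ) : Prop :=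
  ∃ v : Fin 2 → ℂ, v ≠ 0 ∧ (M.map (Complex.ofReal)).mulVec v = μ • v

/-- Key algebraic lemma: if λ² = tλ + c with t < 0 and c < 0, then Re λ < 0. -/
lemma quad_re_neg (t c : ℝ) (ht : t < 0) (hc : c < 0) (lam : ℂ)
    (heq : lam ^ 2 = (t : ℂ) * lam + (c : ℂ)) : lam.re < 0 := by
  have hre : lam.re ^ 2 - lam.im ^ 2 = t * lam.re + c := by
    have := congrArg Complex.re heq
    simpa [pow_two, Complex.mul_re, Complex.add_re, Complex.ofReal_re,
      Complex.ofReal_im] using this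
  have him : (2 * lam.re) * lam.im = t * lam.im := by
    have := congrArg Complex.im heq
    simp [pow_two, Complex.mul_im, Complex.add_im, Complex.ofReal_re,
      Complex.ofReal_im] at this
    linarith
  by_cases hb0 : lam.im = 0
  · rw [hb0] at hre
    by_contra hge
    push_neg at hge
    nlinarith
  · have h2a : 2 * lam.re = t := mul_right_cancel₀ hb0 him
    linarith

/-- When `d` and `e` have the same sign and `θ - e² < 0` (case (2) of
Theorem 2.4), every complex eigenvalue `λ` of `J₂ = [[0,1],[(d-e)/d, θ-e²]]`
satisfies `Re(λ) < 0`. -/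
theorem J2_stable (θ d e : ℝ) (hd : d ≠ 0) (he : e ≠ 0)
    (habs : |d| ≤ |e|) (hne : d ≠ e) (hde : d * e > 0) (hθ : θ - e ^ 2 < 0)
    (lam : ℂ) (h : IsEigenvalueC !![(0 : ℝ), 1; (d - e) / d, θ - e ^ 2] lam) :
    lam.re < 0 := by
  obtain ⟨v, hv, hmul⟩ := h
  have h0 := congrFun hmul 0
  have h1 := congrFun hmul 1
  simp [Matrix.mulVec, Matrix.map, dotProduct, Fin.sum_univ_two, Pi.smul_apply,
    smul_eq_mul] at h0 h1
  -- h0 : v 1 = lam * v 0, h1 : ((d-e)/d) * v 0 + (θ - e²) * v 1 = lam * v 1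
  have hv0 : v 0 ≠ 0 := by
    intro hz
    apply hv
    funext i
    fin_cases i
    · exact hz
    · show v 1 = 0
      rw [h0, hz, mul_zero]
  have key : lam ^ 2 * v 0 = (((θ : ℂ) - (e : ℂ) ^ 2) * lam + ((d : ℂ) - e) / d) * v 0 := by
    linear_combination (-1 : ℂ) * h1 + ((θ : ℂ) - (e : ℂ) ^ 2) * h0 - lam * h0
  have heq : lam ^ 2 = ((θ - e ^ 2 : ℝ) : ℂ) * lam + (((d - e) / d : ℝ) : ℂ) := by
    have := mul_right_cancel₀ hv0 key
    push_cast
    exact this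
  have hc : (d - e) / d < 0 := by
    rcases lt_or_gt_of_ne hd with hdneg | hdpos
    · have hen : e < 0 := by nlinarith
      have hle : e ≤ d := by
        rw [abs_of_neg hdneg, abs_of_neg hen] at habs; linarith
      have hlt : e < d := lt_of_le_of_ne hle (fun a => hne a.symm)
      apply div_neg_of_pos_of_neg <;> linarith
    · have hep : 0 < e := by nlinarith
      have hle : d ≤ e := by
        rw [abs_of_pos hdpos, abs_of_pos hep] at habs; linarith
      have hlt : d < e := lt_of_le_of_ne hle hne
      apply div_neg_of_neg_of_pos <;> linarith
  exact quad_re_neg _ _ hθ hc lam heq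
end

section
/- Let θ, d, e be real numbers with d ≠ 0, e ≠ 0, |d| ≤ |e|, d ≠ e, d·e > 0, and θ − e² > 0, and let J₂ be the real 2×2 matrix with rows (0, 1) and ((d − e)/d, θ − e²). Then every complex eigenvalue λ of J₂ (viewed as a complex matrix) satisfies Re(λ) > 0. -/
open Matrix Complex

/-- When `d` and `e` have the same sign and `θ - e² > 0` (case (3) of
Theorem 2.4), every complex eigenvalue `λ` of `J₂ = [[0,1],[(d-e)/d, θ-e²]]`
satisfies `Re(λ) > 0`. -/
theorem J2_unstable (θ d e : ℝ) (hd : d ≠ 0) (he : e ≠ 0)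
    (habs : |d| ≤ |e|) (hne : d ≠ e) (hde : d * e > 0) (hθ : 0 < θ - e ^ 2)
    (lam : ℂ) (h : IsEigenvalueC !![(0 : ℝ), 1; (d - e) / d, θ - e ^ 2] lam) :
    0 < lam.re := by
  obtain ⟨v, hv, hmv⟩ := h
  set c : ℝ := (d - e) / d with hcdef
  set T : ℝ := θ - e ^ 2 with hTdef
  -- c < 0
  have hc : c < 0 := by
    rcases hd.lt_or_gt with hdneg | hdpos
    · have heneg : e < 0 := by nlinarith
      have : e < d := by
        rw [abs_of_neg hdneg, abs_of_neg heneg] at habs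
        exact lt_of_le_of_ne (by linarith) (fun hh => hne hh.symm)
      exact div_neg_of_pos_of_neg (by linarith) hdneg
    · have hepos : 0 < e := by nlinarith
      have : d < e := by
        rw [abs_of_pos hdpos, abs_of_pos hepos] at habs
        exact lt_of_le_of_ne habs hne
      exact div_neg_of_neg_of_pos (by linarith) hdpos
  have h0 := congrFun hmv 0
  have h1 := congrFun hmv 1
  simp [Matrix.mulVec, dotProduct, Fin.sum_univ_two, Matrix.map_apply] at h0 h1
  -- h0 : v 1 = lam * v 0, h1 : c * v 0 + T * v 1 = lam * v 1
  have hv0 : v 0 ≠ 0 := by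
    intro h00
    apply hv
    funext i
    fin_cases i
    · exact h00
    · show v 1 = 0
      rw [h0, h00, mul_zero]
  have key : lam ^ 2 - (T : ℂ) * lam - (c : ℂ) = 0 := by
    have : (lam ^ 2 - (T : ℂ) * lam - (c : ℂ)) * v 0 = 0 := by
      rw [h0] at h1
      linear_combination -h1
    rcases mul_eq_zero.1 this with hh | hh
    · exact hh
    · exact absurd hh hv0
  have hre : lam.re * lam.re - lam.im * lam.im - T * lam.re - c = 0 := by
    have := congrArg Complex.re key
    simp [pow_two, Complex.mul_re, Complex.mul_im] at this
    linarith
  have him : 2 * lam.re * lam.im - T * lam.im = 0 := by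
    have := congrArg Complex.im key
    simp [pow_two, Complex.mul_re, Complex.mul_im] at this
    linarith
  by_cases hb : lam.im = 0
  · rw [hb] at hre
    by_contra hle
    push_neg at hle
    nlinarith
  · have h2a : 2 * lam.re - T = 0 := by
      have : lam.im * (2 * lam.re - T) = 0 := by ring_nf; ring_nf at him; linarith
      rcases mul_eq_zero.1 this with hh | hh
      · exact absurd hh hb
      · exact hh
    linarith
end
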